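/- arXiv:2504.14503 — 2 statements merged into one kernel-verified Lean document; each statement's English description precedes it below -/
import Mathlib

section
/- Suppose nonnegative reals x on arcs A (both orientations of edges of G) satisfy the flow-balance constraints with root s (net outflow |V|−1 at s and net inflow 1 at each other vertex), and let Y = { {i,j} ∈ E : x_{ij} > 0 or x_{ji} > 0 }. Then the subgraph (V, Y) is connected. -/
/-!
Let `T` be the set of vertices not reachable from `s` along edges of positive flow. Since the
flow is nonnegative, every arc between `T` and its complement carries zero flow, so summing the
balance constraints over `T` makes all arcs cancel and gives `0`. But `s ∉ T`, so the same sum is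
`|T|`; hence `T` is empty.
-/

open SimpleGraph Finset
open scoped Classical

section NetInflow

variable {V M : Type*} [Fintype V] [AddCommGroup M]

def netInflow (x : V → V → M) (i : V) : M :=
  ∑ j, x j i - ∑ j, x i j

theorem sum_netInflow_eq_sum_compl (x : V → V → M) (T : Finset V) :
    ∑ i ∈ T, netInflow x i = ∑ i ∈ T, ∑ j ∈ Tᶜ, (x j i - x i j) := by
  have hsplit : ∀ i, netInflow x i =
      (∑ j ∈ T, x j i - ∑ j ∈ T, x i j) + ∑ j ∈ Tᶜ, (x j i - x i j) := fun i => by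
    rw [netInflow, ← sum_add_sum_compl T (x · i), ← sum_add_sum_compl T (x i ·),
      sum_sub_distrib]
    abel
  simp only [hsplit, sum_add_distrib, sum_sub_distrib]
  rw [sum_comm (s := T) (t := T), sub_self, zero_add]

theorem sum_netInflow_eq_zero_of_cut {x : V → V → M} {T : Finset V}
    (hcut : ∀ i ∈ T, ∀ j ∉ T, x i j = 0 ∧ x j i = 0) :
    ∑ i ∈ T, netInflow x i = 0 := by
  rw [sum_netInflow_eq_sum_compl]
  refine sum_eq_zero fun i hi => sum_eq_zero fun j hj => ?_
  obtain ⟨hij, hji⟩ := hcut i hi j (mem_compl.mp hj)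
  rw [hij, hji, sub_self]

end NetInflow

section PosSupport

variable {V : Type*}

def posSupportGraph (x : V → V → ℝ) : SimpleGraph V :=
  fromEdgeSet {e : Sym2 V | ∃ i j, e = s(i, j) ∧ (0 < x i j ∨ 0 < x j i)}

theorem posSupportGraph_adj_of_pos {x : V → V → ℝ} {i j : V} (hne : i ≠ j) (hpos : 0 < x i j) :
    (posSupportGraph x).Adj i j :=
  (fromEdgeSet_adj _).mpr ⟨⟨i, j, rfl, .inl hpos⟩, hne⟩

theorem eq_zero_of_not_reachable_of_reachable {x : V → V → ℝ} (hnonneg : ∀ i j, 0 ≤ x i j)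
    {s i j : V} (hi : ¬ (posSupportGraph x).Reachable s i)
    (hj : (posSupportGraph x).Reachable s j) : x i j = 0 ∧ x j i = 0 := by
  have hne : i ≠ j := by rintro rfl; exact hi hj
  constructor
  · by_contra h
    exact hi (hj.trans (posSupportGraph_adj_of_pos hne ((hnonneg i j).lt_of_ne' h)).symm.reachable)
  · by_contra h
    exact hi (hj.trans (posSupportGraph_adj_of_pos hne.symm ((hnonneg j i).lt_of_ne' h)).reachable)

end PosSupport

theorem support_of_flow_connected_general {V : Type*} [Fintype V]
    (s : V) (x : V → V → ℝ)
    (hnonneg : ∀ i j, 0 ≤ x i j)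
    (hbal : ∀ i : V,
      (∑ j : V, x j i) - (∑ j : V, x i j) =
        if i = s then -((Fintype.card V : ℝ) - 1) else 1) :
    (SimpleGraph.fromEdgeSet
        {e : Sym2 V | ∃ i j, e = s(i, j) ∧ (0 < x i j ∨ 0 < x j i)}).Connected := by
  change (posSupportGraph x).Connected
  refine (connected_iff_exists_forall_reachable _).mpr ⟨s, fun v => ?_⟩
  by_contra hv
  set T := univ.filter (fun u => ¬ (posSupportGraph x).Reachable s u)
  have hsum_zero : ∑ i ∈ T, netInflow x i = 0 := sum_netInflow_eq_zero_of_cut fun i hi j hj => by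
    simp only [T, mem_filter, mem_univ, true_and, not_not] at hi hj
    exact eq_zero_of_not_reachable_of_reachable hnonneg hi hj
  have hsum_card : ∑ i ∈ T, netInflow x i = #T := by
    refine (sum_congr rfl fun i hi => (hbal i).trans (if_neg ?_)).trans (by simp)
    rintro rfl
    simp [T] at hi
  have hT : T = ∅ := card_eq_zero.mp (by exact_mod_cast hsum_card.symm.trans hsum_zero)
  exact notMem_empty v (hT ▸ mem_filter.mpr ⟨mem_univ v, hv⟩)

/-- If nonnegative reals `x` on the arcs of `G` satisfy the flow-balance
constraints with root `s` (net outflow `|V| - 1` at `s`, net inflow `1`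
elsewhere), then the subgraph on the edges carrying positive flow is
connected. -/
theorem support_of_flow_connected {V : Type*} [Fintype V] [Nonempty V]
    (G : SimpleGraph V) (s : V) (x : V → V → ℝ)
    (hsupp : ∀ i j, ¬ G.Adj i j → x i j = 0)
    (hnonneg : ∀ i j, 0 ≤ x i j)
    (hbal : ∀ i : V,
      (∑ j : V, x j i) - (∑ j : V, x i j) =
        if i = s then -((Fintype.card V : ℝ) - 1) else 1) :
    (SimpleGraph.fromEdgeSet
        {e : Sym2 V | ∃ i j, e = s(i, j) ∧ (0 < x i j ∨ 0 < x j i)}).Connected :=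
  support_of_flow_connected_general s x hnonneg hbal
end

section
/- The set of feasible solutions (x, y) of the MSTC flow model, restricted to y, is in bijection with the set of spanning trees of G that respect all conflict constraints, and the objective value Σ u_{ij} y_{ij} of a feasible solution equals the total cost of the corresponding spanning tree. -/
open SimpleGraph Finset
open scoped Classical

namespace MSTCAux

lemma length_le_one_of_nodup {α : Type*} {l : List α} (h : l.Nodup)
    (h2 : ∀ a ∈ l, ∀ b ∈ l, a = b) : l.length ≤ 1 := by
  match l with
  | [] => simp
  | [a] => simp
  | a :: b :: t =>
    rcases List.nodup_cons.mp h with ⟨ha, _⟩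
    exact absurd (h2 a (by simp) b (by simp)) (fun e => ha (e ▸ by simp))

variable {V : Type*} [DecidableEq V] {H : SimpleGraph V}

lemma countP_snd_sub_fst {a b : V} (p : H.Walk a b) (v : V) :
    (p.darts.countP (fun d => decide (v = d.snd)) : ℤ) -
      (p.darts.countP (fun d => decide (v = d.fst)) : ℤ)
      = (if v = b then 1 else 0) - (if v = a then 1 else 0) := by
  induction p with
  | nil => simp
  | cons h q ih =>
    rw [Walk.darts_cons, List.countP_cons, List.countP_cons]
    simp only [decide_eq_true_eq] at *
    push_cast
    split_ifs at * <;> omega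

lemma sum_countP_fst [Fintype V] {a b : V} (p : H.Walk a b) (i : V) :
    ∑ j : V, p.darts.countP (fun d => decide ((i, j) = d.toProd)) =
      p.darts.countP (fun d => decide (i = d.fst)) := by
  induction p with
  | nil => simp
  | @cons u c b h q ih =>
    rw [Walk.darts_cons, List.countP_cons]
    simp only [List.countP_cons, decide_eq_true_eq]
    rw [Finset.sum_add_distrib, ih]
    congr 1
    simp only [Prod.ext_iff]
    by_cases hiu : i = u
    · subst hiu
      simp
    · simp [hiu]

lemma sum_countP_snd [Fintype V] {a b : V} (p : H.Walk a b) (i : V) :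
    ∑ j : V, p.darts.countP (fun d => decide ((j, i) = d.toProd)) =
      p.darts.countP (fun d => decide (i = d.snd)) := by
  induction p with
  | nil => simp
  | @cons u c b h q ih =>
    rw [Walk.darts_cons, List.countP_cons]
    simp only [List.countP_cons, decide_eq_true_eq]
    rw [Finset.sum_add_distrib, ih]
    congr 1
    simp only [Prod.ext_iff]
    by_cases hic : i = c
    · subst hic
      simp
    · simp [hic]

lemma countP_toProd_le_one {a b : V} {p : H.Walk a b} (hp : p.IsPath) (i j : V) :
    p.darts.countP (fun d => decide ((i, j) = d.toProd)) ≤ 1 := by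
  rw [List.countP_eq_length_filter]
  refine length_le_one_of_nodup
    ((Walk.darts_nodup_of_support_nodup hp.support_nodup).filter _) ?_
  intro d1 h1 d2 h2
  rw [List.mem_filter, decide_eq_true_eq] at h1 h2
  exact SimpleGraph.Dart.ext _ _ (h1.2 ▸ h2.2 ▸ rfl)

lemma adj_of_countP_pos {a b : V} {p : H.Walk a b} {i j : V}
    (h : 0 < p.darts.countP (fun d => decide ((i, j) = d.toProd))) : H.Adj i j := by
  obtain ⟨d, _, hd2⟩ := List.countP_pos_iff.mp h
  rw [decide_eq_true_eq] at hd2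
  have := d.adj
  rw [← hd2] at this
  exact this

lemma card_le_edgeFinset {V : Type*} [Fintype V] [DecidableEq V] {H : SimpleGraph V}
    [Fintype H.edgeSet] (h : H.Connected) : Fintype.card V ≤ H.edgeFinset.card + 1 := by
  obtain ⟨s⟩ := h.nonempty
  have key : ∀ w : V, ∃ z, w ≠ s → H.Adj z w ∧ H.dist s z < H.dist s w := by
    intro w
    by_cases hw : w = s
    · exact ⟨w, fun h' => absurd hw h'⟩
    obtain ⟨q, hq⟩ := (h.preconnected w s).exists_walk_length_eq_dist
    cases q with
    | nil => exact absurd rfl hw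
    | @cons _ z _ hadj q' =>
      refine ⟨z, fun _ => ⟨hadj.symm, ?_⟩⟩
      have h1 : H.dist s z ≤ q'.length := by rw [SimpleGraph.dist_comm]; exact SimpleGraph.dist_le q'
      have h2 : q'.length + 1 = H.dist w s := by simpa using hq
      rw [SimpleGraph.dist_comm (u := s) (v := w)]
      omega
  choose z hz using key
  have hcard : (univ.erase s).card ≤ H.edgeFinset.card := by
    refine Finset.card_le_card_of_injOn (fun w => s(w, z w)) ?_ ?_
    · intro w hw
      rw [Finset.mem_coe, Finset.mem_erase] at hw
      exact mem_edgeFinset.mpr ((hz w hw.1).1.symm)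
    · intro w1 hw1 w2 hw2 heq
      simp only [Finset.coe_erase, Set.mem_diff, Finset.mem_coe, Set.mem_singleton_iff] at hw1 hw2
      rw [Sym2.eq_iff] at heq
      rcases heq with ⟨h1, _⟩ | ⟨h1, h2⟩
      · exact h1
      · exfalso
        have d1 := (hz w1 hw1.2).2
        have d2 := (hz w2 hw2.2).2
        rw [h2] at d1
        rw [← h1] at d2
        omega
  rw [Finset.card_erase_of_mem (mem_univ s), Finset.card_univ] at hcard
  have : Nonempty V := ⟨s⟩
  have : 0 < Fintype.card V := Fintype.card_pos
  omega

lemma isTree_of_connected_of_card {V : Type*} [Fintype V] [DecidableEq V] {H : SimpleGraph V}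
    [Fintype H.edgeSet] (h : H.Connected) (hc : H.edgeFinset.card + 1 = Fintype.card V) :
    H.IsTree := by
  refine ⟨h, ?_⟩
  intro u c hcyc
  obtain ⟨e, he⟩ : ∃ e, e ∈ c.edges := by
    cases c with
    | nil => exact absurd rfl hcyc.ne_nil
    | cons h q => exact ⟨_, by rw [Walk.edges_cons]; exact List.mem_cons_self⟩
  induction e using Sym2.ind with
  | _ v w =>
  have hadj := c.adj_of_mem_edges he
  have hreach : (H \ fromEdgeSet {s(v, w)}).Reachable v w :=
    (adj_and_reachable_delete_edges_iff_exists_cycle.mpr ⟨u, c, hcyc, he⟩).2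
  have hstep : ∀ {a b : V}, H.Walk a b → (H \ fromEdgeSet {s(v, w)}).Reachable a b := by
    intro a b p
    induction p with
    | nil => exact Reachable.refl _
    | @cons a' c' b' hadj' q ih =>
      refine Reachable.trans ?_ ih
      by_cases hedge : s(a', c') = s(v, w)
      · rw [Sym2.eq_iff] at hedge
        rcases hedge with ⟨rfl, rfl⟩ | ⟨rfl, rfl⟩
        · exact hreach
        · exact hreach.symm
      · refine SimpleGraph.Adj.reachable ?_
        rw [SimpleGraph.sdiff_adj]
        refine ⟨hadj', fun hcon => ?_⟩
        rw [fromEdgeSet_adj] at hcon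
        exact hedge (Set.mem_singleton_iff.mp hcon.1)
  have hconn' : (H \ fromEdgeSet {s(v, w)}).Connected := by
    have := h.nonempty
    exact ⟨fun a b => (h.preconnected a b).elim fun p => hstep p⟩
  have hb := card_le_edgeFinset hconn'
  have hE : (H \ fromEdgeSet {s(v, w)}).edgeFinset = H.edgeFinset.erase s(v, w) := by
    ext e
    rw [mem_edgeFinset, edgeSet_sdiff, edgeSet_fromEdgeSet, edgeSet_sdiff_sdiff_isDiag,
      Finset.mem_erase, mem_edgeFinset]
    simp only [Set.mem_diff, Set.mem_singleton_iff]
    tauto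
  rw [hE, Finset.card_erase_of_mem (mem_edgeFinset.mpr hadj)] at hb
  have hpos : 0 < H.edgeFinset.card := Finset.card_pos.mpr ⟨s(v, w), mem_edgeFinset.mpr hadj⟩
  omega

end MSTCAux

def IsSpanningTree {V : Type*} (G : SimpleGraph V) (T : Set (Sym2 V)) : Prop :=
  T ⊆ G.edgeSet ∧ (SimpleGraph.fromEdgeSet T).IsTree

def Respects {V : Type*} (T : Set (Sym2 V)) (C : Set (Sym2 (Sym2 V))) : Prop :=
  ∀ e f : Sym2 V, s(e, f) ∈ C → ¬(e ∈ T ∧ f ∈ T)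

/-- The cost of a set of edges. -/
noncomputable def cost {V : Type*} [Fintype V] [DecidableEq V] (u : Sym2 V → ℕ) (T : Set (Sym2 V)) : ℕ :=
  ∑ e : Sym2 V, if e ∈ T then u e else 0

/-- Feasibility for the MSTC multi-commodity flow model: flow balance with root
`s`, capacity coupling, conflict constraints, binary `y` supported on the edges
of `G`, and `Σ y = |V| - 1`. -/
def Feasible {V : Type*} [Fintype V] [DecidableEq V] (G : SimpleGraph V)
    (C : Set (Sym2 (Sym2 V))) (s : V) (x : V → V → ℝ) (y : Sym2 V → ℕ) : Prop :=
  (∀ i j, 0 ≤ x i j) ∧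
  (∀ i j, ¬ G.Adj i j → x i j = 0) ∧
  (∀ e, y e ≤ 1) ∧
  (∀ e, e ∉ G.edgeSet → y e = 0) ∧
  (∀ i : V, (∑ j : V, x j i) - (∑ j : V, x i j) =
      if i = s then -((Fintype.card V : ℝ) - 1) else 1) ∧
  (∀ i j, G.Adj i j → x i j ≤ ((Fintype.card V : ℝ) - 1) * (y s(i, j) : ℝ)) ∧
  (∀ e f : Sym2 V, s(e, f) ∈ C → y e + y f ≤ 1) ∧
  ((∑ e : Sym2 V, y e) = Fintype.card V - 1)

/-- The feasible solutions of the MSTC flow model, restricted to `y`, are in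
bijection (via the indicator map) with the conflict-respecting spanning trees
of `G`, and the objective value of a feasible solution equals the cost of the
corresponding spanning tree. -/
theorem flow_model_bijection {V : Type*} [Fintype V] [DecidableEq V]
    (G : SimpleGraph V) (hG : G.Connected) (u : Sym2 V → ℕ)
    (C : Set (Sym2 (Sym2 V))) (s : V) :
    Set.BijOn (fun T : Set (Sym2 V) => fun e => if e ∈ T then (1 : ℕ) else 0)
        {T | IsSpanningTree G T ∧ Respects T C}
        {y | ∃ x, Feasible G C s x y} ∧
      ∀ T ∈ {T : Set (Sym2 V) | IsSpanningTree G T ∧ Respects T C},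
        (∑ e : Sym2 V, u e * (if e ∈ T then 1 else 0)) = cost u T := by
  classical
  have hVne : Nonempty V := hG.nonempty
  have hV1 : 1 ≤ Fintype.card V := Fintype.card_pos
  constructor
  · refine ⟨?_, ?_, ?_⟩
    · -- MapsTo
      rintro T ⟨⟨hTsub, hTtree⟩, hTC⟩
      simp only [Set.mem_setOf_eq]
      have hconn : (fromEdgeSet T).Connected := hTtree.isConnected
      have hHadj : ∀ {i j : V}, (fromEdgeSet T).Adj i j → s(i, j) ∈ T ∧ i ≠ j := by
        intro i j hij; rwa [fromEdgeSet_adj] at hij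
      have hHG : ∀ {i j : V}, (fromEdgeSet T).Adj i j → G.Adj i j := fun hij =>
        (SimpleGraph.mem_edgeSet G).mp (hTsub (hHadj hij).1)
      have hex : ∀ t : V, ∃ p : (fromEdgeSet T).Walk s t, p.IsPath := fun t =>
        ⟨((hconn.preconnected s t).some.toPath : (fromEdgeSet T).Path s t).1,
          ((hconn.preconnected s t).some.toPath : (fromEdgeSet T).Path s t).2⟩
      choose P hP using hex
      set cnt : V → V → ℕ :=
        fun i j => ∑ t : V, (P t).darts.countP (fun d => decide ((i, j) = d.toProd)) with hcnt
      have hcnt_adj : ∀ {i j : V}, ¬ (fromEdgeSet T).Adj i j → cnt i j = 0 := by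
        intro i j hij
        rw [hcnt]
        refine Finset.sum_eq_zero fun t _ => ?_
        by_contra hne
        exact hij (MSTCAux.adj_of_countP_pos (Nat.pos_of_ne_zero hne))
      refine ⟨fun i j => (cnt i j : ℝ), ?_, ?_, ?_, ?_, ?_, ?_, ?_, ?_⟩
      · intro i j
        show (0 : ℝ) ≤ (cnt i j : ℝ)
        positivity
      · intro i j hij
        show ((cnt i j : ℕ) : ℝ) = 0
        rw [hcnt_adj (fun h => hij (hHG h))]; simp
      · intro e
        show (if e ∈ T then (1 : ℕ) else 0) ≤ 1
        split <;> simp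
      · intro e he
        show (if e ∈ T then (1 : ℕ) else 0) = 0
        rw [if_neg (fun hT => he (hTsub hT))]
      · -- balance
        intro i
        show (∑ j : V, ((cnt j i : ℕ) : ℝ)) - (∑ j : V, ((cnt i j : ℕ) : ℝ))
          = if i = s then -((Fintype.card V : ℝ) - 1) else 1
        have hsum1 : ∑ j : V, cnt j i
            = ∑ t : V, (P t).darts.countP (fun d => decide (i = d.snd)) := by
          rw [hcnt, Finset.sum_comm]
          exact Finset.sum_congr rfl fun t _ => MSTCAux.sum_countP_snd (P t) i
        have hsum2 : ∑ j : V, cnt i j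
            = ∑ t : V, (P t).darts.countP (fun d => decide (i = d.fst)) := by
          rw [hcnt, Finset.sum_comm]
          exact Finset.sum_congr rfl fun t _ => MSTCAux.sum_countP_fst (P t) i
        have key : ∀ t : V, (((P t).darts.countP (fun d => decide (i = d.snd)) : ℕ) : ℝ)
            - (((P t).darts.countP (fun d => decide (i = d.fst)) : ℕ) : ℝ)
            = (if i = t then 1 else 0) - (if i = s then 1 else 0) := by
          intro t
          have h := MSTCAux.countP_snd_sub_fst (P t) i
          have h2 : (((P t).darts.countP (fun d => decide (i = d.snd)) : ℕ) : ℝ)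
              - (((P t).darts.countP (fun d => decide (i = d.fst)) : ℕ) : ℝ)
              = ((((P t).darts.countP (fun d => decide (i = d.snd)) : ℤ)
                - ((P t).darts.countP (fun d => decide (i = d.fst)) : ℤ) : ℤ) : ℝ) := by
            push_cast; ring
          rw [h2, h]
          split_ifs <;> norm_num
        have hLHS : (∑ j : V, ((cnt j i : ℕ) : ℝ)) - (∑ j : V, ((cnt i j : ℕ) : ℝ))
            = ∑ t : V, ((if i = t then (1 : ℝ) else 0) - (if i = s then 1 else 0)) := by
          rw [← Nat.cast_sum, ← Nat.cast_sum, hsum1, hsum2, Nat.cast_sum, Nat.cast_sum,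
            ← Finset.sum_sub_distrib]
          exact Finset.sum_congr rfl fun t _ => key t
        rw [hLHS, Finset.sum_sub_distrib, Finset.sum_ite_eq Finset.univ i (fun _ => (1 : ℝ)),
          if_pos (Finset.mem_univ i), Finset.sum_const, Finset.card_univ]
        by_cases his : i = s
        · simp only [his, if_pos, nsmul_eq_mul, mul_one]
          ring
        · simp [his]
      · -- capacity
        intro i j hij
        show ((cnt i j : ℕ) : ℝ)
          ≤ ((Fintype.card V : ℝ) - 1) * ((if s(i, j) ∈ T then (1 : ℕ) else 0 : ℕ) : ℝ)
        by_cases hmem : s(i, j) ∈ T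
        · rw [if_pos hmem]
          have hPs : (P s).darts = [] := by
            have h := SimpleGraph.Walk.isPath_iff_eq_nil.mp (hP s)
            rw [h]; rfl
          have hb : cnt i j ≤ Fintype.card V - 1 := by
            show (∑ t : V, (P t).darts.countP (fun d => decide ((i, j) = d.toProd)))
              ≤ Fintype.card V - 1
            rw [← Finset.add_sum_erase Finset.univ _ (Finset.mem_univ s)]
            have h0 : (P s).darts.countP (fun d => decide ((i, j) = d.toProd)) = 0 := by
              rw [hPs]; rfl
            rw [h0, zero_add]
            calc ∑ t ∈ Finset.univ.erase s,
                  (P t).darts.countP (fun d => decide ((i, j) = d.toProd))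
                ≤ ∑ _t ∈ Finset.univ.erase s, 1 :=
                  Finset.sum_le_sum fun t _ => MSTCAux.countP_toProd_le_one (hP t) i j
              _ = Fintype.card V - 1 := by
                  rw [Finset.sum_const, smul_eq_mul, mul_one,
                    Finset.card_erase_of_mem (Finset.mem_univ s), Finset.card_univ]
          calc ((cnt i j : ℕ) : ℝ) ≤ ((Fintype.card V - 1 : ℕ) : ℝ) := Nat.cast_le.mpr hb
            _ = (Fintype.card V : ℝ) - 1 := by
                rw [Nat.cast_sub hV1]; norm_num
            _ = ((Fintype.card V : ℝ) - 1) * ((1 : ℕ) : ℝ) := by norm_num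
        · rw [if_neg hmem]
          have h0 : cnt i j = 0 := hcnt_adj (fun h => hmem (hHadj h).1)
          rw [h0]; simp
      · -- conflicts
        intro e f hef
        show (if e ∈ T then (1 : ℕ) else 0) + (if f ∈ T then (1 : ℕ) else 0) ≤ 1
        have hnot := hTC e f hef
        split_ifs with h1 h2 h3
        · exact absurd ⟨h1, h2⟩ hnot
        all_goals norm_num
      · -- sum y
        show (∑ e : Sym2 V, if e ∈ T then (1 : ℕ) else 0) = Fintype.card V - 1
        have hnoDiag : ∀ e ∈ T, ¬ e.IsDiag := fun e he =>
          G.not_isDiag_of_mem_edgeSet (hTsub he)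
        have hE : (fromEdgeSet T).edgeFinset = Set.toFinset T := by
          ext e
          rw [SimpleGraph.mem_edgeFinset, edgeSet_fromEdgeSet, Set.mem_toFinset]
          exact ⟨fun h => h.1, fun h => ⟨h, hnoDiag e h⟩⟩
        have hcard := hTtree.card_edgeFinset
        rw [hE] at hcard
        have hsum : ∑ e : Sym2 V, (if e ∈ T then (1 : ℕ) else 0) = (Set.toFinset T).card := by
          rw [Finset.sum_boole, Nat.cast_id]
          congr 1
          ext e
          simp [Set.mem_toFinset]
        rw [hsum]
        omega
    · -- InjOn
      rintro T1 ⟨⟨_, _⟩, _⟩ T2 ⟨⟨_, _⟩, _⟩ heq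
      ext e
      have h := congrFun heq e
      by_cases h1 : e ∈ T1 <;> by_cases h2 : e ∈ T2 <;> simp [h1, h2] at h ⊢
    · -- SurjOn
      rintro y ⟨x, hx0, hxadj, hy1, hyE, hbal, hcap, hconf, hysum⟩
      obtain ⟨T, hT⟩ : ∃ T : Set (Sym2 V), T = {e | y e = 1} := ⟨_, rfl⟩
      have hy01 : ∀ e, y e = 0 ∨ y e = 1 := fun e =>
        Nat.le_one_iff_eq_zero_or_eq_one.mp (hy1 e)
      have hmemT : ∀ e, e ∈ T ↔ y e = 1 := fun e => by rw [hT]; exact Iff.rfl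
      have hind : (fun e => if e ∈ T then (1 : ℕ) else 0) = y := by
        funext e
        by_cases he : e ∈ T
        · rw [if_pos he]; exact ((hmemT e).mp he).symm
        · rw [if_neg he]
          rcases hy01 e with h | h
          · exact h.symm
          · exact absurd ((hmemT e).mpr h) he
      have hsubT : T ⊆ G.edgeSet := by
        intro e he
        by_contra hne
        have he' : y e = 1 := (hmemT e).mp he
        rw [hyE e hne] at he'
        exact absurd he' (by norm_num)
      have hresp : Respects T C := by
        intro e f hef ⟨he, hf⟩
        have := hconf e f hef
        rw [(hmemT e).mp he, (hmemT f).mp hf] at this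
        omega
      have hH'adj : ∀ {i j : V}, y s(i, j) = 1 → i ≠ j → (fromEdgeSet T).Adj i j :=
        fun h hne => (SimpleGraph.fromEdgeSet_adj T).mpr ⟨(hmemT _).mpr h, hne⟩
      -- cross edges carry no flow
      have hxzero : ∀ i j : V,
          ((fromEdgeSet T).Reachable s i ↔ ¬ (fromEdgeSet T).Reachable s j) → x i j = 0 := by
        intro i j hxor
        by_cases hadj : G.Adj i j
        · rcases hy01 s(i, j) with h0 | h1
          · have hle := hcap i j hadj
            rw [h0] at hle
            push_cast at hle
            linarith [hx0 i j]
          · exfalso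
            have hne := G.ne_of_adj hadj
            have hAdj := hH'adj h1 hne
            by_cases hri : (fromEdgeSet T).Reachable s i
            · exact (hxor.mp hri) (hri.trans hAdj.reachable)
            · have hrj : (fromEdgeSet T).Reachable s j := by
                by_contra hrj
                exact hri (hxor.mpr hrj)
              exact hri (hrj.trans hAdj.symm.reachable)
        · exact hxadj i j hadj
      set A : Finset V := Finset.univ.filter (fun v => ¬ (fromEdgeSet T).Reachable s v) with hA
      have hmemA : ∀ i, i ∈ A ↔ ¬ (fromEdgeSet T).Reachable s i := by
        intro i; rw [hA, Finset.mem_filter]; simp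
      have hsnotA : s ∉ A := fun h => (hmemA s).mp h (SimpleGraph.Reachable.refl s)
      have hsum1 : ∑ i ∈ A, ((∑ j : V, x j i) - ∑ j : V, x i j) = (A.card : ℝ) := by
        rw [Finset.sum_congr rfl (fun i hi => by
          rw [hbal i, if_neg (fun h : i = s => hsnotA (h ▸ hi))])]
        simp
      have hsum0 : ∑ i ∈ A, ((∑ j : V, x j i) - ∑ j : V, x i j) = 0 := by
        have hc1 : ∀ i ∈ A, ∑ j : V, x j i = ∑ j ∈ A, x j i := by
          intro i hi
          rw [← Finset.sum_add_sum_compl A (fun j => x j i)]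
          have hz : ∑ j ∈ Aᶜ, x j i = 0 := Finset.sum_eq_zero fun j hj => by
            refine hxzero j i (iff_of_true ?_ ((hmemA i).mp hi))
            by_contra hr
            exact (Finset.mem_compl.mp hj) ((hmemA j).mpr hr)
          rw [hz, add_zero]
        have hc2 : ∀ i ∈ A, ∑ j : V, x i j = ∑ j ∈ A, x i j := by
          intro i hi
          rw [← Finset.sum_add_sum_compl A (fun j => x i j)]
          have hz : ∑ j ∈ Aᶜ, x i j = 0 := Finset.sum_eq_zero fun j hj => by
            refine hxzero i j (iff_of_false ((hmemA i).mp hi) ?_)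
            intro hcon
            by_contra _
            exact (Finset.mem_compl.mp hj) ((hmemA j).mpr hcon)
          rw [hz, add_zero]
        rw [Finset.sum_congr rfl (fun i hi => by rw [hc1 i hi, hc2 i hi])]
        rw [Finset.sum_sub_distrib, Finset.sum_comm, sub_self]
      have hAempty : A = ∅ := by
        rw [hsum0] at hsum1
        have : A.card = 0 := by exact_mod_cast hsum1.symm
        exact Finset.card_eq_zero.mp this
      have hreach : ∀ v : V, (fromEdgeSet T).Reachable s v := by
        intro v
        by_contra hr
        have : v ∈ A := (hmemA v).mpr hr
        rw [hAempty] at this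
        exact absurd this (Finset.notMem_empty v)
      have hconn' : (fromEdgeSet T).Connected := by
        have : ((fromEdgeSet T)).Preconnected := fun a b => (hreach a).symm.trans (hreach b)
        exact ⟨this⟩
      have hnoDiag : ∀ e ∈ T, ¬ e.IsDiag := fun e he =>
        G.not_isDiag_of_mem_edgeSet (hsubT he)
      have hE : (fromEdgeSet T).edgeFinset = Set.toFinset T := by
        ext e
        rw [SimpleGraph.mem_edgeFinset, edgeSet_fromEdgeSet, Set.mem_toFinset]
        exact ⟨fun h => h.1, fun h => ⟨h, hnoDiag e h⟩⟩
      have hcardT : (Set.toFinset T).card = Fintype.card V - 1 := by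
        have hsum : ∑ e : Sym2 V, (if e ∈ T then (1 : ℕ) else 0) = (Set.toFinset T).card := by
          rw [Finset.sum_boole, Nat.cast_id]
          congr 1
          ext e
          simp [Set.mem_toFinset]
        rw [← hsum]
        rw [Finset.sum_congr rfl (fun e _ => congrFun hind e)]
        exact hysum
      have htree : (fromEdgeSet T).IsTree := by
        refine MSTCAux.isTree_of_connected_of_card hconn' ?_
        rw [hE, hcardT]
        omega
      exact ⟨T, ⟨⟨hsubT, htree⟩, hresp⟩, hind⟩
  · -- objective
    intro T _
    unfold cost
    exact Finset.sum_congr rfl fun e _ => by by_cases he : e ∈ T <;> simp [he]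
end
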